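/- arXiv:1606.01317 — 2 statements merged into one kernel-verified Lean document; each statement's English description precedes it below -/
import Mathlib

section
/- Fix an integer n > 5 and let μ satisfy 1/2 < μ ≤ 1. If μ < 3/4 + (1/4)·√( 9 − (2^{n+2} + 8)/(2^{n−1} − 1) ), then the tent map T_μ avoids the pattern σ_n = (n−1) n 1 2 3 ⋯ (n−2); that is, σ_n ∉ Allow(T_μ). -/
open Set

/-- The symmetric tent map of height `μ`:
`T_μ(x) = 2μx` for `x ≤ 1/2` and `T_μ(x) = 2μ(1-x)` for `x > 1/2`. -/
noncomputable def tentMap (μ : ℝ) (x : ℝ) : ℝ :=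
  if x ≤ 1/2 then 2*μ*x else 2*μ*(1-x)

/-- `Allows f p` means the permutation `p` of `{0, …, n-1}` is an allowed pattern of the
map `f` on `[0,1]`: there is `x ∈ [0,1]` whose orbit `x, f(x), …, f^[n-1](x)` is in the
same relative order as `p 0, p 1, …, p (n-1)`. -/
def Allows (f : ℝ → ℝ) {n : ℕ} (p : Equiv.Perm (Fin n)) : Prop :=
  ∃ x ∈ Icc (0:ℝ) 1, ∀ i j : Fin n, p i < p j ↔ f^[(i:ℕ)] x < f^[(j:ℕ)] x

/-- The permutation σ_n = (n-1) n 1 2 ⋯ (n-2) (one-line notation, 1-indexed), i.e. in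
0-indexed terms the map `i ↦ i + (n-2) (mod n)` on `Fin n`. -/
def sigmaPerm (n : ℕ) : Equiv.Perm (Fin n) := finRotate n ^ (n - 2)

/-!
Write `t = 2μ` and `y k = T_μ^[k] x` for an orbit realizing `σ_n`, with `n = m + 3`, so that
`y 2 < ⋯ < y (m+2) < y 0 < y 1`. Then `y 1 > 1/2` and every `y i` with `2 ≤ i ≤ m + 1` lies
in the left branch: if `y (m+2) > 1/2` then `y 0 > 1/2`, and a point `y i > 1/2` below `y 0`
would be mapped above `y 1 = t (1 - y 0)`. Hence `y (m+2) = t^(m+1) (1 - y 1)` with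
`1 - y 1 ≥ 1 - t/2`, and both `y (m+2) ≤ 1/2` and `y (m+2) > 1/2` force
`t^(m+1) (2 - t) ≤ 1`. On the other hand the bound on `μ` says `t < 2 - 2^(-m)`, and then
`t^(m+1) (2 - t) > 1` by comparing `t^(m+1)` with the geometric sum `1 + t + ⋯ + t^m`.
-/

open Finset

lemma sigmaPerm_apply_val (m : ℕ) (i : Fin (m + 3)) :
    (sigmaPerm (m + 3) i : ℕ) = if (i : ℕ) < 2 then i + (m + 1) else i - 2 := by
  have hσ : ⇑(sigmaPerm (m + 3)) = finCycle (⟨m + 1, by omega⟩ : Fin (m + 3)) := by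
    rw [finCycle_eq_finRotate_iterate, sigmaPerm, Equiv.Perm.coe_pow]
    rfl
  rw [hσ, finCycle_apply, Fin.val_add]
  dsimp only
  split_ifs
  · exact Nat.mod_eq_of_lt (by omega)
  · rw [show (i : ℕ) + (m + 1) = (i - 2) + (m + 3) by omega, Nat.add_mod_right,
      Nat.mod_eq_of_lt (by omega)]

lemma exists_orbit_of_allows_sigmaPerm {f : ℝ → ℝ} {m : ℕ}
    (h : Allows f (sigmaPerm (m + 3))) :
    ∃ x ∈ Icc (0 : ℝ) 1, (∀ i, 2 ≤ i → i ≤ m + 2 → f^[i] x ≤ f^[m + 2] x) ∧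
      f^[m + 2] x < x ∧ x < f x := by
  obtain ⟨x, hx, hord⟩ := h
  have lt_of_rank_lt : ∀ i j (hi : i < m + 3) (hj : j < m + 3),
      (if i < 2 then i + (m + 1) else i - 2) < (if j < 2 then j + (m + 1) else j - 2) →
        f^[i] x < f^[j] x := fun i j hi hj hij =>
    (hord ⟨i, hi⟩ ⟨j, hj⟩).mp <| by
      rw [Fin.lt_def, sigmaPerm_apply_val, sigmaPerm_apply_val]
      exact hij
  refine ⟨x, hx, fun i hi2 hi => ?_, ?_, ?_⟩
  · rcases hi.eq_or_lt with rfl | hi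
    · exact le_rfl
    · exact (lt_of_rank_lt i (m + 2) (by omega) (by omega) (by split_ifs <;> omega)).le
  · exact lt_of_rank_lt (m + 2) 0 (by omega) (by omega) (by split_ifs <;> omega)
  · exact lt_of_rank_lt 0 1 (by omega) (by omega) (by split_ifs <;> omega)

section TentMap

variable {μ x : ℝ}

lemma tentMap_of_le_half (hx : x ≤ 1 / 2) : tentMap μ x = 2 * μ * x := if_pos hx

lemma tentMap_of_half_lt (hx : 1 / 2 < x) : tentMap μ x = 2 * μ * (1 - x) := if_neg hx.not_ge

lemma tentMap_le (hμ : 0 ≤ μ) (hx : x ∈ Icc (0 : ℝ) 1) : tentMap μ x ≤ μ := by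
  obtain ⟨hx0, hx1⟩ := hx
  rcases le_or_gt x (1 / 2) with h | h
  · rw [tentMap_of_le_half h]; nlinarith
  · rw [tentMap_of_half_lt h]; nlinarith

lemma iterate_tentMap_add_eq_pow_mul (a k : ℕ)
    (h : ∀ i, a ≤ i → i < a + k → (tentMap μ)^[i] x ≤ 1 / 2) :
    (tentMap μ)^[a + k] x = (2 * μ) ^ k * (tentMap μ)^[a] x := by
  induction k with
  | zero => simp
  | succ k ih =>
    rw [← add_assoc, Function.iterate_succ_apply', tentMap_of_le_half (h _ (by omega) (by omega)),
      ih fun i hai hi => h i hai (by omega), pow_succ]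
    ring

lemma pow_mul_two_sub_le_one_of_sigma_orbit (hμ : 1 / 2 < μ) {m : ℕ}
    (hx : x ∈ Icc (0 : ℝ) 1)
    (hle : ∀ i, 2 ≤ i → i ≤ m + 2 → (tentMap μ)^[i] x ≤ (tentMap μ)^[m + 2] x)
    (hlast : (tentMap μ)^[m + 2] x < x) (h01 : x < tentMap μ x) :
    (2 * μ) ^ (m + 1) * (2 - 2 * μ) ≤ 1 := by
  set y : ℕ → ℝ := fun k => (tentMap μ)^[k] x
  have hy_succ (k : ℕ) : y (k + 1) = tentMap μ (y k) := Function.iterate_succ_apply' _ k x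
  have hy1_le : y 1 ≤ μ := tentMap_le (by linarith) hx
  have hy2_lt : y 2 < y 1 := (hle 2 le_rfl (by omega)).trans_lt (hlast.trans h01)
  have hy1_half : 1 / 2 < y 1 := by
    by_contra! h
    have hy1_pos : 0 < y 1 := hx.1.trans_lt h01
    have : y 2 = 2 * μ * y 1 := by rw [hy_succ, tentMap_of_le_half h]
    nlinarith
  have hy2 : y 2 = 2 * μ * (1 - y 1) := by rw [hy_succ, tentMap_of_half_lt hy1_half]
  have hlast_eq (hleft : ∀ i, 2 ≤ i → i ≤ m + 1 → y i ≤ 1 / 2) :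
      y (m + 2) = (2 * μ) ^ (m + 1) * (1 - y 1) := by
    calc y (m + 2) = (2 * μ) ^ m * y 2 := by
          rw [add_comm]
          exact iterate_tentMap_add_eq_pow_mul 2 m fun i hi2 hi => hleft i hi2 (by omega)
      _ = (2 * μ) ^ (m + 1) * (1 - y 1) := by rw [hy2, pow_succ]; ring
  set A := (2 * μ) ^ (m + 1)
  rcases le_or_gt (y (m + 2)) (1 / 2) with hlast_half | hlast_half
  · have hlast_eq := hlast_eq fun i hi2 hi => (hle i hi2 (by omega)).trans hlast_half
    calc A * (2 - 2 * μ) = 2 * (A * (1 - μ)) := by ring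
      _ ≤ 2 * y (m + 2) := by rw [hlast_eq]; gcongr
      _ ≤ 1 := by linarith
  · have hy1 : y 1 = 2 * μ * (1 - x) := tentMap_of_half_lt (hlast_half.trans hlast)
    -- a point of the right branch below `x` is mapped above `y 1 = T x`
    have hlast_eq := hlast_eq fun i hi2 hi => by
      by_contra! hi_half
      have hyi_lt : y i < x := (hle i hi2 (by omega)).trans_lt hlast
      have hyi1 : y (i + 1) = 2 * μ * (1 - y i) := by rw [hy_succ, tentMap_of_half_lt hi_half]
      have : y (i + 1) < y 1 := (hle (i + 1) (by omega) (by omega)).trans_lt (hlast.trans h01)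
      nlinarith
    have hA : 0 < A := by positivity
    have hs : 0 < 1 - y 1 := by nlinarith
    -- `2μ y (m+2) < 2μ x = 2μ - y 1` and `2 y (m+2) > 1`, with `y (m+2) = A (1 - y 1)`
    have h_upper : (1 - y 1) * (2 * μ * A - 1) < 2 * μ - 1 := by nlinarith
    have h_lower : 2 * μ - 1 < (1 - y 1) * (2 * A * (2 * μ - 1)) := by nlinarith
    have := lt_of_mul_lt_mul_left (h_upper.trans h_lower) hs.le
    linarith

end TentMap

lemma pow_mul_two_sub_inv_pow_le_geom_sum {t : ℝ} (ht0 : 0 ≤ t) (ht2 : t ≤ 2) (m : ℕ) :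
    t ^ m * (2 - 1 / 2 ^ m) ≤ ∑ k ∈ range (m + 1), t ^ k := by
  induction m with
  | zero => norm_num
  | succ m ih =>
    have ht_pow : t ^ (m + 1) ≤ 2 ^ (m + 1) := pow_le_pow_left₀ ht0 ht2 _
    rw [geom_sum_succ]
    calc t ^ (m + 1) * (2 - 1 / 2 ^ (m + 1))
        = t * (t ^ m * (2 - 1 / 2 ^ m)) + t ^ (m + 1) / 2 ^ (m + 1) := by
          field_simp; ring
      _ ≤ t * ∑ k ∈ range (m + 1), t ^ k + 1 := by
          gcongr
          exact (div_le_one (by positivity)).mpr ht_pow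

lemma one_lt_pow_succ_mul_two_sub {t : ℝ} {m : ℕ} (ht1 : 1 < t) (ht : t < 2 - 1 / 2 ^ m) :
    1 < t ^ (m + 1) * (2 - t) := by
  have ht2 : t ≤ 2 := by linarith [show (0 : ℝ) < 1 / 2 ^ m by positivity]
  have hsum := pow_mul_two_sub_inv_pow_le_geom_sum (by linarith) ht2 m
  have hpow_lt : t ^ (m + 1) < ∑ k ∈ range (m + 1), t ^ k := by
    rw [pow_succ]
    exact (mul_lt_mul_of_pos_left ht (by positivity)).trans_le hsum
  -- `t^(m+1) (2 - t) - 1 = (t - 1) (∑_{k ≤ m} t^k - t^(m+1))`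
  nlinarith [geom_sum_mul t (m + 1)]

lemma sqrt_nine_sub_div_le {n : ℕ} (hn : 4 ≤ n) :
    √(9 - ((2 : ℝ) ^ (n + 2) + 8) / ((2 : ℝ) ^ (n - 1) - 1)) ≤ 1 - 16 / 2 ^ n := by
  obtain ⟨k, rfl⟩ : ∃ k, n = k + 1 := ⟨n - 1, by omega⟩
  have hQ : (8 : ℝ) ≤ 2 ^ k := by
    calc (8 : ℝ) = 2 ^ 3 := by norm_num
      _ ≤ 2 ^ k := pow_le_pow_right₀ (by norm_num) (by omega)
  have hQ1 : (0 : ℝ) < 2 ^ k - 1 := by linarith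
  have hlhs : 9 - ((2 : ℝ) ^ (k + 1 + 2) + 8) / (2 ^ (k + 1 - 1) - 1)
      = (2 ^ k - 17) / (2 ^ k - 1) := by
    rw [Nat.add_sub_cancel]
    field_simp
    ring
  have hrhs : (1 - 16 / 2 ^ (k + 1) : ℝ) = (2 ^ k - 8) / 2 ^ k := by
    rw [pow_succ]
    field_simp
    ring
  rw [hlhs, hrhs, Real.sqrt_le_left (div_nonneg (by linarith) (by positivity)), div_pow,
    div_le_div_iff₀ hQ1 (by positivity)]
  nlinarith

theorem tentMap_avoids_sigma_of_mu_bound_general (n : ℕ) (hn : 5 < n)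
    (μ : ℝ) (hμ1 : 1/2 < μ)
    (hb : μ < 3/4 + (1/4) * Real.sqrt (9 - ((2:ℝ)^(n+2) + 8)/((2:ℝ)^(n-1) - 1))) :
    ¬ Allows (tentMap μ) (sigmaPerm n) := by
  obtain ⟨m, rfl⟩ : ∃ m, n = m + 3 := ⟨n - 3, by omega⟩
  intro hallow
  obtain ⟨x, hx, hle, hlast, h01⟩ := exists_orbit_of_allows_sigmaPerm hallow
  have h2μ : 2 * μ < 2 - 1 / 2 ^ m := by
    have hsqrt := sqrt_nine_sub_div_le (n := m + 3) (by omega)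
    have h16 : (16 : ℝ) / 2 ^ (m + 3) = 2 * (1 / 2 ^ m) := by
      rw [pow_add]
      field_simp
      norm_num
    linarith
  have hlower := one_lt_pow_succ_mul_two_sub (by linarith) h2μ
  have hupper := pow_mul_two_sub_le_one_of_sigma_orbit hμ1 hx hle hlast h01
  linarith

/-- For `n > 5` and `1/2 < μ ≤ 1`: if `μ < 3/4 + (1/4)√(9 - (2^(n+2)+8)/(2^(n-1)-1))`,
then `T_μ` avoids the pattern `σ_n = (n-1) n 1 2 ⋯ (n-2)`. -/
theorem tentMap_avoids_sigma_of_mu_bound (n : ℕ) (hn : 5 < n)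
    (μ : ℝ) (hμ1 : 1/2 < μ) (hμ2 : μ ≤ 1)
    (hb : μ < 3/4 + (1/4) * Real.sqrt (9 - ((2:ℝ)^(n+2) + 8)/((2:ℝ)^(n-1) - 1))) :
    ¬ Allows (tentMap μ) (sigmaPerm n) :=
  tentMap_avoids_sigma_of_mu_bound_general n hn μ hμ1 hb
end

section
/- For every μ with 1/2 < μ < 1, the inclusion Allow(T_μ) ⊆ Allow(T) is strict; that is, there exists a permutation π with π ∈ Allow(T) and π ∉ Allow(T_μ). -/
/-
For `T_μ` with `1/2 ≤ μ ≤ 1`, a point `x₁ = T_μ(x₀) ∈ [0, μ]` that `T_μ` moves down must lie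
right of `1/2`, so `x₂ ≥ 2μ(1-μ) > 0`. An increasing stretch of orbit stays in the left branch
(a point right of `1/2` followed by a larger one is followed by a drop), where `T_μ` multiplies
by `2μ`. So an orbit that drops at step two and then climbs for `m` steps reaches
`(2μ)^m · 2μ(1-μ)`, which exceeds `1` for large `m` when `μ < 1`. For the full tent map, the orbit
of `1/2 - δ/4` with `δ` tiny does exactly this: it drops from near `1` to `δ` and then doubles.
-/

open Set

theorem allows_iff_exists_strictMono {f : ℝ → ℝ} {n : ℕ} (p : Equiv.Perm (Fin n)) :
    Allows f p ↔ ∃ x ∈ Icc (0:ℝ) 1, StrictMono fun k => f^[(p.symm k : ℕ)] x := by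
  refine exists_congr fun x => and_congr_right fun _ => ⟨fun h a b hab => ?_, fun h i j => ?_⟩
  · exact (h (p.symm a) (p.symm b)).1 (by simpa using hab)
  · simpa using (h.lt_iff_lt (a := p i) (b := p j)).symm

-- In one-line notation `(n-1) n 1 2 ⋯ (n-2)`: the orbit in increasing order is
-- `x₂ < x₃ < ⋯ < x_{n-1} < x₀ < x₁`.
def rotatePattern (n : ℕ) [NeZero n] : Equiv.Perm (Fin n) := (Equiv.addRight 2).symm

theorem val_rotatePattern_symm {n : ℕ} [NeZero n] (hn : 2 < n) (k : Fin n) :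
    ((rotatePattern n).symm k : ℕ) =
      if (k : ℕ) + 2 < n then (k : ℕ) + 2 else (k : ℕ) + 2 - n := by
  have h2 : ((2 : Fin n) : ℕ) = 2 := Nat.mod_eq_of_lt hn
  simp only [rotatePattern, Equiv.symm_symm, Equiv.coe_addRight, Fin.val_add_eq_ite, h2]
  split_ifs <;> omega

section TentMap

variable {μ x y : ℝ}

theorem tentMap_of_le (h : y ≤ 1/2) : tentMap μ y = 2*μ*y := if_pos h

theorem tentMap_of_lt (h : 1/2 < y) : tentMap μ y = 2*μ*(1-y) := if_neg h.not_ge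

theorem tentMap_mem_Icc (hμ : 0 ≤ μ) (hy : y ∈ Icc (0:ℝ) 1) : tentMap μ y ∈ Icc 0 μ := by
  obtain ⟨hy0, hy1⟩ := hy
  unfold tentMap
  split_ifs <;> constructor <;> nlinarith

theorem mapsTo_tentMap (hμ0 : 0 ≤ μ) (hμ1 : μ ≤ 1) : MapsTo (tentMap μ) (Icc 0 1) (Icc 0 1) :=
  fun _ hy => Icc_subset_Icc_right hμ1 (tentMap_mem_Icc hμ0 hy)

theorem iterate_tentMap_eq_of_pow_mul_le {k : ℕ} (h : ∀ i < k, (2*μ)^i * x ≤ 1/2) :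
    (tentMap μ)^[k] x = (2*μ)^k * x := by
  induction k with
  | zero => simp
  | succ k ih =>
    rw [Function.iterate_succ_apply', ih fun i hi => h i (by omega),
      tentMap_of_le (h k k.lt_succ_self), pow_succ]
    ring

theorem le_tentMap_of_tentMap_lt (hμ : 1/2 ≤ μ) (hy0 : 0 ≤ y) (hyμ : y ≤ μ)
    (h : tentMap μ y < y) : 2*μ*(1-μ) ≤ tentMap μ y := by
  have hy : 1/2 < y := by
    by_contra! hy
    rw [tentMap_of_le hy] at h
    nlinarith
  rw [tentMap_of_lt hy]
  nlinarith

theorem tentMap_tentMap_lt (hμ : 0 < μ) (hy : 1/2 < y) (h : y < tentMap μ y) :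
    tentMap μ (tentMap μ y) < tentMap μ y := by
  rw [tentMap_of_lt (hy.trans h), tentMap_of_lt hy]
  rw [tentMap_of_lt hy] at h
  nlinarith

theorem iterate_tentMap_eq_of_increasing (hμ : 0 < μ) {j : ℕ}
    (h : ∀ i ≤ j, (tentMap μ)^[i] x < (tentMap μ)^[i+1] x) :
    (tentMap μ)^[j] x = (2*μ)^j * x := by
  induction j with
  | zero => simp
  | succ j ih =>
    have hj := h j (by omega)
    have hj1 := h (j+1) le_rfl
    simp only [Function.iterate_succ_apply'] at hj hj1
    have hle : (tentMap μ)^[j] x ≤ 1/2 := by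
      by_contra! hgt
      exact (tentMap_tentMap_lt hμ hgt hj).not_gt hj1
    rw [Function.iterate_succ_apply', tentMap_of_le hle, ih fun i hi => h i (by omega), pow_succ]
    ring

end TentMap

theorem allows_tentMap_one_rotatePattern (m : ℕ) : Allows (tentMap 1) (rotatePattern (m + 3)) := by
  -- The orbit of `1/2 - δ/4` is `1/2 - δ/4, 1 - δ/2, δ, 2δ, …, 2^m δ = 1/4`.
  set δ : ℝ := (4 * 2^m)⁻¹ with hδ
  have hδ0 : 0 < δ := by positivity
  have hδm : 2^m * δ = 1/4 := by rw [hδ]; field_simp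
  have hδ1 : δ ≤ 1/4 := by nlinarith [one_le_pow₀ (M₀ := ℝ) (a := 2) (by norm_num) (n := m)]
  have hw1 : tentMap 1 (1/2 - δ/4) = 1 - δ/2 := by rw [tentMap_of_le (by linarith)]; ring
  have hw2 : tentMap 1 (1 - δ/2) = δ := by rw [tentMap_of_lt (by linarith)]; ring
  have hw : ∀ k ≤ m, (tentMap 1)^[k + 2] (1/2 - δ/4) = 2^k * δ := by
    intro k hk
    rw [Function.iterate_add_apply, Function.iterate_succ_apply', Function.iterate_one, hw1, hw2,
      iterate_tentMap_eq_of_pow_mul_le fun i hi => ?_, mul_one]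
    · calc (2*1:ℝ)^i * δ ≤ 2^m * δ := by rw [mul_one]; gcongr <;> [norm_num; omega]
        _ ≤ 1/2 := by linarith
  rw [allows_iff_exists_strictMono]
  refine ⟨1/2 - δ/4, ⟨by linarith, by linarith⟩, Fin.strictMono_iff_lt_succ.2 fun ⟨i, hi⟩ => ?_⟩
  simp only [val_rotatePattern_symm (by omega : 2 < m + 3), Fin.val_castSucc, Fin.val_succ]
  obtain hlt | rfl | rfl : i < m ∨ m = i ∨ m + 1 = i := by omega
  · rw [if_pos (by omega), if_pos (by omega), hw i hlt.le, hw (i + 1) hlt, pow_succ]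
    nlinarith [pow_pos (two_pos (α := ℝ)) i]
  · rw [if_pos (by omega), if_neg (by omega), hw m le_rfl, hδm,
      show m + 1 + 2 - (m + 3) = 0 by omega]
    simp only [Function.iterate_zero, id]
    linarith
  · rw [if_neg (by omega), if_neg (by omega), show m + 1 + 2 - (m + 3) = 0 by omega,
      show m + 1 + 1 + 2 - (m + 3) = 1 by omega]
    simp only [Function.iterate_zero, id, Function.iterate_one, hw1]
    linarith

theorem not_allows_tentMap_rotatePattern {μ : ℝ} {m : ℕ} (hμ : 1/2 ≤ μ) (hμ1 : μ ≤ 1)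
    (h : 1 < (2*μ)^m * (2*μ*(1-μ))) : ¬ Allows (tentMap μ) (rotatePattern (m + 4)) := by
  rw [allows_iff_exists_strictMono]
  rintro ⟨x, hx, hmono⟩
  have horbit : ∀ k, (tentMap μ)^[k] x ∈ Icc 0 1 :=
    fun k => (mapsTo_tentMap (by linarith) hμ1).iterate k hx
  have hval := val_rotatePattern_symm (n := m + 4) (by omega)
  have hdrop : tentMap μ (tentMap μ x) < tentMap μ x := by
    simpa [hval] using hmono (show (0 : Fin (m + 4)) < Fin.last (m + 3) from Fin.last_pos)
  set y := (tentMap μ)^[2] x with hy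
  have hrun : ∀ i ≤ m, (tentMap μ)^[i] y < (tentMap μ)^[i + 1] y := by
    intro i hi
    have := hmono (show (⟨i, by omega⟩ : Fin (m + 4)) < ⟨i + 1, by omega⟩ from Nat.lt_succ_self i)
    simp only [hval, if_pos (show i + 2 < m + 4 by omega),
      if_pos (show i + 1 + 2 < m + 4 by omega)] at this
    rwa [hy, ← Function.iterate_add_apply, ← Function.iterate_add_apply]
  have hy_lb : 2*μ*(1-μ) ≤ y :=
    le_tentMap_of_tentMap_lt hμ (horbit 1).1 (tentMap_mem_Icc (by linarith) hx).2 hdrop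
  have hle : (2*μ)^m * y ≤ 1 := by
    rw [← iterate_tentMap_eq_of_increasing (by linarith) hrun, hy, ← Function.iterate_add_apply]
    exact (horbit _).2
  nlinarith [pow_pos (show (0:ℝ) < 2*μ by linarith) m]

/-- For `1/2 < μ < 1`, the inclusion `Allow(T_μ) ⊆ Allow(T)` is strict: some pattern is
allowed for the full tent map `T = T_1` but not for `T_μ`. -/
theorem allow_tentMap_ssubset (μ : ℝ) (hμ1 : 1/2 < μ) (hμ2 : μ < 1) :
    ∃ (n : ℕ) (p : Equiv.Perm (Fin n)),
      Allows (tentMap 1) p ∧ ¬ Allows (tentMap μ) p := by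
  have hc : 0 < 2*μ*(1-μ) := by nlinarith
  obtain ⟨m, hm⟩ := pow_unbounded_of_one_lt (2*μ*(1-μ))⁻¹ (by linarith : (1:ℝ) < 2*μ)
  refine ⟨m + 4, rotatePattern (m + 4), allows_tentMap_one_rotatePattern (m + 1),
    not_allows_tentMap_rotatePattern hμ1.le hμ2.le ((inv_lt_iff_one_lt_mul₀ hc).1 hm)⟩
end
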